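/- Let τ₁, τ₂, τ₃ be permutations of a finite set Γ = mov(τ₁) ∪ mov(τ₂) ∪ mov(τ₃) satisfying (T1), (T2), (T3), and additionally (T4): the group ⟨τ₁,τ₂,τ₃⟩ acts transitively on Γ. Then the latin bitrade (T⊛, T⊚) obtained from the cycles of τ₁, τ₂, τ₃ is indecomposable: whenever (U⊛, U⊚) is a latin bitrade with ∅ ≠ U⊛ ⊆ T⊛ and U⊚ ⊆ T⊚, then (U⊛, U⊚) = (T⊛, T⊚). -/

import Mathlib

/-- `Agree2 r a b` says that the triples `a` and `b` agree in the two
coordinates other than `r` (coordinates indexed by `Fin 3`). -/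
def Agree2 {A₁ A₂ A₃ : Type*} (r : Fin 3) (a b : A₁ × A₂ × A₃) : Prop :=
  if r = 0 then a.2.1 = b.2.1 ∧ a.2.2 = b.2.2
  else if r = 1 then a.1 = b.1 ∧ a.2.2 = b.2.2
  else a.1 = b.1 ∧ a.2.1 = b.2.1

/-- `CoordNe r a b` says that the triples `a` and `b` differ in coordinate `r`. -/
def CoordNe {A₁ A₂ A₃ : Type*} (r : Fin 3) (a b : A₁ × A₂ × A₃) : Prop :=
  if r = 0 then a.1 ≠ b.1
  else if r = 1 then a.2.1 ≠ b.2.1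
  else a.2.2 ≠ b.2.2

/-- A partial latin square: any two triples agreeing in two coordinates are equal. -/
def IsPLS {A₁ A₂ A₃ : Type*} (T : Set (A₁ × A₂ × A₃)) : Prop :=
  ∀ a ∈ T, ∀ b ∈ T, ∀ r : Fin 3, Agree2 r a b → a = b

/-- A latin bitrade `(T₁, T₂)`: two disjoint partial latin squares such that each triple
of one is matched, for each pair of coordinates, by a unique triple of the other
agreeing in those two coordinates. -/
structure IsBitrade {A₁ A₂ A₃ : Type*} (T₁ T₂ : Set (A₁ × A₂ × A₃)) : Prop where
  pls₁ : IsPLS T₁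
  pls₂ : IsPLS T₂
  disj : T₁ ∩ T₂ = ∅
  r2 : ∀ a ∈ T₁, ∀ r : Fin 3, ∃! b, b ∈ T₂ ∧ Agree2 r a b
  r3 : ∀ a ∈ T₂, ∀ r : Fin 3, ∃! b, b ∈ T₁ ∧ Agree2 r a b

/-- The set of cycles of a permutation, viewed as the quotient of the underlying set
by the same-cycle relation. -/
abbrev CycleOf {Γ : Type*} (σ : Equiv.Perm Γ) := Quotient (Equiv.Perm.SameCycle.setoid σ)

/-- The partial latin square `T⊛` of Construction: triples of cycles
`(ρ₁, ρ₂, ρ₃)` (one of each `τ_i`) through a common point. -/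
def Tstar {Γ : Type*} (τ : Fin 3 → Equiv.Perm Γ) :
    Set (CycleOf (τ 0) × CycleOf (τ 1) × CycleOf (τ 2)) :=
  {ρ | ∃ x : Γ, Quotient.mk _ x = ρ.1 ∧ Quotient.mk _ x = ρ.2.1 ∧ Quotient.mk _ x = ρ.2.2}

/-- The partial latin square `T⊚` of Construction: triples of cycles
`(ρ₁, ρ₂, ρ₃)` through distinct points `x, x', x''` with
`xτ₁ = x'`, `x'τ₂ = x''`, `x''τ₃ = x`. -/
def Tcirc {Γ : Type*} (τ : Fin 3 → Equiv.Perm Γ) :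
    Set (CycleOf (τ 0) × CycleOf (τ 1) × CycleOf (τ 2)) :=
  {ρ | ∃ x x' x'' : Γ, x ≠ x' ∧ x' ≠ x'' ∧ x ≠ x'' ∧
    τ 0 x = x' ∧ τ 1 x' = x'' ∧ τ 2 x'' = x ∧
    Quotient.mk _ x = ρ.1 ∧ Quotient.mk _ x' = ρ.2.1 ∧ Quotient.mk _ x'' = ρ.2.2}

/-!
Every triple of `T⊛` is the triple `starTriple x` of cycles through a point `x`, and every triple
of `T⊚` is the triple `circTriple y` of cycles through `y`, `τ₀ y`, `τ₁ τ₀ y`. By (T2) two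
distinct points never share cycles of two different `τ_i`, so the `T⊛`-triple agreeing with
`circTriple y` off coordinate `r` must be `starTriple` of `τ₁ τ₀ y`, `y` or `τ₀ y` (for
`r = 0, 1, 2`). The bitrade axioms therefore give `starTriple (circPoint r y) ∈ U⊛ ↔
circTriple y ∈ U⊚` for every `r`, so the set of points `x` with `starTriple x ∈ U⊛` is
invariant under `τ₀` and `τ₁`, hence under `τ₂ = (τ₁ τ₀)⁻¹`. By (T4) it is all of `Γ`, and then `r = 1`
gives `circTriple y ∈ U⊚` for every `y`.
-/

theorem Agree2.symm {A₁ A₂ A₃ : Type*} {r : Fin 3} {a b : A₁ × A₂ × A₃}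
    (h : Agree2 r a b) : Agree2 r b a := by
  unfold Agree2 at h ⊢
  split_ifs at h ⊢ <;> exact ⟨h.1.symm, h.2.symm⟩

namespace Construction

open Equiv Perm
open scoped Pointwise

variable {Γ : Type*} (τ : Fin 3 → Perm Γ)

def starTriple (x : Γ) : CycleOf (τ 0) × CycleOf (τ 1) × CycleOf (τ 2) :=
  (Quotient.mk _ x, Quotient.mk _ x, Quotient.mk _ x)

def circTriple (y : Γ) : CycleOf (τ 0) × CycleOf (τ 1) × CycleOf (τ 2) :=
  (Quotient.mk _ y, Quotient.mk _ (τ 0 y), Quotient.mk _ (τ 1 (τ 0 y)))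

def circPoint : Fin 3 → Perm Γ := ![τ 1 * τ 0, 1, τ 0]

theorem mem_Tstar {a : CycleOf (τ 0) × CycleOf (τ 1) × CycleOf (τ 2)} :
    a ∈ Tstar τ ↔ ∃ x, starTriple τ x = a := by
  constructor
  · rintro ⟨x, h₀, h₁, h₂⟩
    exact ⟨x, Prod.ext h₀ (Prod.ext h₁ h₂)⟩
  · rintro ⟨x, rfl⟩
    exact ⟨x, rfl, rfl, rfl⟩

theorem exists_circTriple_eq_of_mem_Tcirc {a : CycleOf (τ 0) × CycleOf (τ 1) × CycleOf (τ 2)}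
    (h : a ∈ Tcirc τ) : ∃ y, circTriple τ y = a := by
  obtain ⟨y, _, _, -, -, -, rfl, rfl, -, h₀, h₁, h₂⟩ := h
  exact ⟨y, Prod.ext h₀ (Prod.ext h₁ h₂)⟩

theorem eq_circPoint_of_agree2 (t1 : ∀ x, τ 2 (τ 1 (τ 0 x)) = x)
    (t2 : ∀ i j : Fin 3, i < j → ∀ x y : Γ, x ≠ y →
      ¬((τ i).SameCycle x y ∧ (τ j).SameCycle x y))
    {r : Fin 3} {x y : Γ} (h : Agree2 r (starTriple τ x) (circTriple τ y)) :
    x = circPoint τ r y := by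
  have eq_of_sameCycle : ∀ {i j : Fin 3} {x z : Γ}, i < j →
      (τ i).SameCycle x z → (τ j).SameCycle x z → x = z :=
    fun hij hi hj => of_not_not fun hne => t2 _ _ hij _ _ hne ⟨hi, hj⟩
  fin_cases r <;> obtain ⟨h₁, h₂⟩ := h
  · exact eq_of_sameCycle (i := 1) (j := 2) (by decide)
      (sameCycle_apply_right.2 (Quotient.exact h₁)) (Quotient.exact h₂)
  · exact eq_of_sameCycle (i := 0) (j := 2) (by decide)
      (Quotient.exact h₁) ((Quotient.exact h₂).trans ⟨1, by simp [t1, circPoint]⟩)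
  · exact eq_of_sameCycle (i := 0) (j := 1) (by decide)
      (sameCycle_apply_right.2 (Quotient.exact h₁)) (Quotient.exact h₂)

variable {τ} {U₁ U₂ : Set (CycleOf (τ 0) × CycleOf (τ 1) × CycleOf (τ 2))}

theorem starTriple_circPoint_mem_iff (t1 : ∀ x, τ 2 (τ 1 (τ 0 x)) = x)
    (t2 : ∀ i j : Fin 3, i < j → ∀ x y : Γ, x ≠ y →
      ¬((τ i).SameCycle x y ∧ (τ j).SameCycle x y))
    (hU : IsBitrade U₁ U₂) (hU₁ : U₁ ⊆ Tstar τ) (hU₂ : U₂ ⊆ Tcirc τ) (r : Fin 3) (y : Γ) :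
    starTriple τ (circPoint τ r y) ∈ U₁ ↔ circTriple τ y ∈ U₂ := by
  constructor
  · intro hs
    obtain ⟨b, ⟨hb, hagree⟩, -⟩ := hU.r2 _ hs r
    obtain ⟨y', rfl⟩ := exists_circTriple_eq_of_mem_Tcirc τ (hU₂ hb)
    rwa [(circPoint τ r).injective (eq_circPoint_of_agree2 τ t1 t2 hagree).symm] at hb
  · intro hc
    obtain ⟨b, ⟨hb, hagree⟩, -⟩ := hU.r3 _ hc r
    obtain ⟨x, rfl⟩ := (mem_Tstar τ).1 (hU₁ hb)
    rwa [← eq_circPoint_of_agree2 τ t1 t2 hagree.symm]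

theorem starTriple_apply_mem_iff_of_mem_closure (t1 : ∀ x, τ 2 (τ 1 (τ 0 x)) = x)
    (t2 : ∀ i j : Fin 3, i < j → ∀ x y : Γ, x ≠ y →
      ¬((τ i).SameCycle x y ∧ (τ j).SameCycle x y))
    (hU : IsBitrade U₁ U₂) (hU₁ : U₁ ⊆ Tstar τ) (hU₂ : U₂ ⊆ Tcirc τ) {g : Perm Γ}
    (hg : g ∈ Subgroup.closure {τ 0, τ 1, τ 2}) (x : Γ) :
    starTriple τ (g x) ∈ U₁ ↔ starTriple τ x ∈ U₁ := by
  have key := starTriple_circPoint_mem_iff t1 t2 hU hU₁ hU₂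
  set H := MulAction.stabilizer (Perm Γ) {x | starTriple τ x ∈ U₁}
  have mem_H : ∀ {σ : Perm Γ}, (∀ x, starTriple τ (σ x) ∈ U₁ ↔ starTriple τ x ∈ U₁) → σ ∈ H :=
    fun h => MulAction.mem_stabilizer_set.2 h
  have h₀ : τ 0 ∈ H := mem_H fun x => (key 2 x).trans (key 1 x).symm
  have h₁ : τ 1 ∈ H := mem_H fun x => by
    simpa [circPoint] using (key 0 ((τ 0)⁻¹ x)).trans (key 2 ((τ 0)⁻¹ x)).symm
  have h₂ : τ 2 ∈ H := by
    rw [eq_inv_of_mul_eq_one_left (a := τ 2) (b := τ 1 * τ 0) (Perm.ext t1)]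
    exact inv_mem (mul_mem h₁ h₀)
  have hle : Subgroup.closure {τ 0, τ 1, τ 2} ≤ H := by
    refine (Subgroup.closure_le H).2 ?_
    rintro σ (rfl | rfl | rfl)
    exacts [h₀, h₁, h₂]
  exact MulAction.mem_stabilizer_set.1 (hle hg) x

end Construction

open Construction in
theorem construction_indecomposable_general {Γ : Type*} (τ : Fin 3 → Equiv.Perm Γ)
    (t1 : ∀ x, τ 2 (τ 1 (τ 0 x)) = x)
    (t2 : ∀ i j : Fin 3, i < j → ∀ x y : Γ, x ≠ y →
      ¬((τ i).SameCycle x y ∧ (τ j).SameCycle x y))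
    (t4 : ∀ x y : Γ, ∃ g ∈ Subgroup.closure ({τ 0, τ 1, τ 2} : Set (Equiv.Perm Γ)), g x = y) :
    ∀ U₁ U₂ : Set (CycleOf (τ 0) × CycleOf (τ 1) × CycleOf (τ 2)),
      IsBitrade U₁ U₂ → U₁.Nonempty → U₁ ⊆ Tstar τ → U₂ ⊆ Tcirc τ →
      U₁ = Tstar τ ∧ U₂ = Tcirc τ := by
  intro U₁ U₂ hU ⟨a, ha⟩ hU₁ hU₂
  obtain ⟨x₀, rfl⟩ := (mem_Tstar τ).1 (hU₁ ha)
  have mem_U₁ : ∀ x, starTriple τ x ∈ U₁ := fun x => by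
    obtain ⟨g, hg, rfl⟩ := t4 x₀ x
    exact (starTriple_apply_mem_iff_of_mem_closure t1 t2 hU hU₁ hU₂ hg x₀).2 ha
  refine ⟨hU₁.antisymm fun b hb => ?_, hU₂.antisymm fun b hb => ?_⟩
  · obtain ⟨x, rfl⟩ := (mem_Tstar τ).1 hb
    exact mem_U₁ x
  · obtain ⟨y, rfl⟩ := exists_circTriple_eq_of_mem_Tcirc τ hb
    exact (starTriple_circPoint_mem_iff t1 t2 hU hU₁ hU₂ 1 y).1 (mem_U₁ y)

/-- If `τ₁, τ₂, τ₃` satisfy (T1), (T2), (T3) and additionally (T4)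
(the group `⟨τ₁, τ₂, τ₃⟩` is transitive on `Γ`), then the latin bitrade `(T⊛, T⊚)`
obtained from the cycles of `τ₁, τ₂, τ₃` is indecomposable: any latin bitrade
`(U⊛, U⊚)` with `∅ ≠ U⊛ ⊆ T⊛` and `U⊚ ⊆ T⊚` equals `(T⊛, T⊚)`. -/
theorem construction_indecomposable {Γ : Type*} [Finite Γ] (τ : Fin 3 → Equiv.Perm Γ)
    (t1 : ∀ x, τ 2 (τ 1 (τ 0 x)) = x)
    (t2 : ∀ i j : Fin 3, i < j → ∀ x y : Γ, x ≠ y →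
      ¬((τ i).SameCycle x y ∧ (τ j).SameCycle x y))
    (t3 : ∀ i : Fin 3, ∀ x : Γ, τ i x ≠ x)
    (t4 : ∀ x y : Γ, ∃ g ∈ Subgroup.closure ({τ 0, τ 1, τ 2} : Set (Equiv.Perm Γ)), g x = y) :
    ∀ U₁ U₂ : Set (CycleOf (τ 0) × CycleOf (τ 1) × CycleOf (τ 2)),
      IsBitrade U₁ U₂ → U₁.Nonempty → U₁ ⊆ Tstar τ → U₂ ⊆ Tcirc τ →
      U₁ = Tstar τ ∧ U₂ = Tcirc τ :=
  construction_indecomposable_general τ t1 t2 t4
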